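/- Let R be a nonnegative k×k matrix with 0 < ρ(R) < 1 and suppose π_q = π₁ R^{q-1} with π₁ a strictly positive row vector and R primitive (irreducible aperiodic nonnegative). Then lim_{τ→∞} (1/τ) log Pr(Q ≥ τ) = log ρ(R), where Pr(Q ≥ τ) = Σ_{q≥⌈τ⌉} π_q · 1. -/

import Mathlib

/-!
By Gelfand's formula `‖Rⁿ‖^(1/n) → r`. For the `ℓ^∞` operator norm, `‖Rⁿ‖` is the largest row
sum of the nonnegative matrix `Rⁿ`, and since `π₁` is strictly positive, `uₙ = π₁ Rⁿ 𝟙` lies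
within constant factors of it; hence `uₙ^(1/n) → r` as well. The tail `∑_{n ≥ N} uₙ` is at least
`u_N` and, for every `s ∈ (r, 1)`, eventually at most `s^N / (1 - s)`, so its `N`-th root also
tends to `r`. Taking logarithms at `N = ⌈τ⌉ - 1` gives the decay rate.
-/

open Matrix Filter Topology

attribute [local instance] Matrix.linftyOpNormedRing Matrix.linftyOpNormedAlgebra

theorem tendsto_const_rpow_inv_natCast {c : ℝ} (hc : c ≠ 0) :
    Tendsto (fun n : ℕ => c ^ (n⁻¹ : ℝ)) atTop (𝓝 1) := by
  have := (Real.continuousAt_const_rpow (b := 0) hc).tendsto.comp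
    (tendsto_inv_atTop_zero.comp (tendsto_natCast_atTop_atTop (R := ℝ)))
  rwa [Real.rpow_zero] at this

theorem tendsto_rpow_inv_natCast_of_le_mul_of_mul_le {u v : ℕ → ℝ} {c C r : ℝ} (hc : 0 < c)
    (hC : 0 < C) (hv : 0 ≤ v) (hlow : ∀ n, c * v n ≤ u n) (hup : ∀ n, u n ≤ C * v n)
    (h : Tendsto (fun n => v n ^ (n⁻¹ : ℝ)) atTop (𝓝 r)) :
    Tendsto (fun n => u n ^ (n⁻¹ : ℝ)) atTop (𝓝 r) := by
  refine tendsto_of_tendsto_of_tendsto_of_le_of_le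
    (by simpa using (tendsto_const_rpow_inv_natCast hc.ne').mul h)
    (by simpa using (tendsto_const_rpow_inv_natCast hC.ne').mul h)
    (fun n => ?_) (fun n => ?_)
  · rw [← Real.mul_rpow hc.le (hv n)]
    exact Real.rpow_le_rpow (mul_nonneg hc.le (hv n)) (hlow n) (by positivity)
  · rw [← Real.mul_rpow hC.le (hv n)]
    exact Real.rpow_le_rpow ((mul_nonneg hc.le (hv n)).trans (hlow n)) (hup n) (by positivity)

theorem eventually_le_pow_of_tendsto_rpow_inv_natCast {u : ℕ → ℝ} {r s : ℝ} (hu : 0 ≤ u)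
    (h : Tendsto (fun n => u n ^ (n⁻¹ : ℝ)) atTop (𝓝 r)) (hrs : r < s) :
    ∀ᶠ n in atTop, u n ≤ s ^ n := by
  filter_upwards [h.eventually (gt_mem_nhds hrs), eventually_ne_atTop 0] with n hn hn0
  calc u n = (u n ^ (n⁻¹ : ℝ)) ^ n := (Real.rpow_inv_natCast_pow (hu n) hn0).symm
    _ ≤ s ^ n := pow_le_pow_left₀ (Real.rpow_nonneg (hu n) _) hn.le n

theorem tendsto_tsum_nat_add_rpow_inv_natCast {u : ℕ → ℝ} (hu : 0 ≤ u) {r : ℝ} (hr : r < 1)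
    (h : Tendsto (fun n => u n ^ (n⁻¹ : ℝ)) atTop (𝓝 r)) :
    Tendsto (fun N => (∑' n, u (n + N)) ^ (N⁻¹ : ℝ)) atTop (𝓝 r) := by
  have hr0 : 0 ≤ r := ge_of_tendsto' h fun n => Real.rpow_nonneg (hu n) _
  have hsum : Summable u := by
    obtain ⟨s, hrs, hs1⟩ := exists_between hr
    refine (summable_geometric_of_lt_one (hr0.trans hrs.le) hs1).of_norm_bounded_eventually_nat ?_
    filter_upwards [eventually_le_pow_of_tendsto_rpow_inv_natCast hu h hrs] with n hn
    rwa [Real.norm_of_nonneg (hu n)]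
  have hle_tail (N : ℕ) : u N ≤ ∑' n, u (n + N) := by
    simpa using ((summable_nat_add_iff N).2 hsum).le_tsum 0 fun n _ => hu _
  refine tendsto_order.2 ⟨fun a ha => ?_, fun b hb => ?_⟩
  · filter_upwards [h.eventually (lt_mem_nhds ha)] with N hN
    exact hN.trans_le (Real.rpow_le_rpow (hu N) (hle_tail N) (by positivity))
  obtain ⟨s, hrs, hs⟩ := exists_between (lt_min hb hr)
  have hs0 : 0 < s := hr0.trans_lt hrs
  have hs1 : s < 1 := hs.trans_le (min_le_right _ _)
  have hgeom := summable_geometric_of_lt_one hs0.le hs1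
  have htail : ∀ᶠ N in atTop, ∑' n, u (n + N) ≤ (1 - s)⁻¹ * s ^ N := by
    obtain ⟨N₀, hN₀⟩ :=
      eventually_atTop.1 (eventually_le_pow_of_tendsto_rpow_inv_natCast hu h hrs)
    filter_upwards [eventually_ge_atTop N₀] with N hN
    calc ∑' n, u (n + N) ≤ ∑' n, s ^ N * s ^ n :=
          ((summable_nat_add_iff N).2 hsum).tsum_le_tsum
            (fun n => by rw [← pow_add, add_comm]; exact hN₀ _ (by omega)) (hgeom.mul_left _)
      _ = (1 - s)⁻¹ * s ^ N := by
          rw [tsum_mul_left, tsum_geometric_of_lt_one hs0.le hs1, mul_comm]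
  have hlim : Tendsto (fun N : ℕ => (1 - s)⁻¹ ^ (N⁻¹ : ℝ) * s) atTop (𝓝 s) := by
    simpa using (tendsto_const_rpow_inv_natCast (inv_ne_zero (sub_pos.2 hs1).ne')).mul_const s
  filter_upwards [htail, hlim.eventually (gt_mem_nhds (hs.trans_le (min_le_left _ _))),
    eventually_ne_atTop 0] with N hN hlt hN0
  calc (∑' n, u (n + N)) ^ (N⁻¹ : ℝ) ≤ ((1 - s)⁻¹ * s ^ N) ^ (N⁻¹ : ℝ) :=
        Real.rpow_le_rpow (tsum_nonneg fun n => hu _) hN (by positivity)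
    _ = (1 - s)⁻¹ ^ (N⁻¹ : ℝ) * s := by
        rw [Real.mul_rpow (inv_nonneg.2 (sub_pos.2 hs1).le) (by positivity),
          Real.pow_rpow_inv_natCast hs0.le hN0]
    _ < b := hlt

theorem tendsto_log_div_of_tendsto_rpow_inv_natCast {f : ℕ → ℝ} (hf : 0 ≤ f) {r : ℝ} (hr : 0 < r)
    (h : Tendsto (fun n => f n ^ (n⁻¹ : ℝ)) atTop (𝓝 r)) :
    Tendsto (fun n => Real.log (f n) / n) atTop (𝓝 (Real.log r)) := by
  refine (h.log hr.ne').congr' ?_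
  filter_upwards [eventually_ne_atTop 0] with n hn
  rcases (hf n).eq_or_lt with h0 | hpos
  · simp [← h0, Real.zero_rpow (inv_ne_zero (Nat.cast_ne_zero.2 hn))]
  · rw [Real.log_rpow hpos, inv_mul_eq_div]

theorem tendsto_natCast_ceil_sub_one_div_atTop :
    Tendsto (fun τ : ℝ => ((⌈τ⌉₊ - 1 : ℕ) : ℝ) / τ) atTop (𝓝 1) := by
  have hlow : Tendsto (fun τ : ℝ => 1 - τ⁻¹) atTop (𝓝 1) := by
    simpa using (tendsto_const_nhds (x := (1 : ℝ))).sub tendsto_inv_atTop_zero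
  have hcast {τ : ℝ} (hτ : 1 ≤ τ) : ((⌈τ⌉₊ - 1 : ℕ) : ℝ) = ⌈τ⌉₊ - 1 :=
    Nat.cast_pred (Nat.ceil_pos.2 (by linarith))
  refine tendsto_of_tendsto_of_tendsto_of_le_of_le' hlow tendsto_const_nhds ?_ ?_
  · filter_upwards [eventually_ge_atTop 1] with τ hτ
    rw [hcast hτ, le_div_iff₀ (by linarith), sub_mul, inv_mul_cancel₀ (by linarith)]
    linarith [Nat.le_ceil τ]
  · filter_upwards [eventually_ge_atTop 1] with τ hτ
    rw [hcast hτ, div_le_one (by linarith)]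
    linarith [Nat.ceil_lt_add_one (by linarith : 0 ≤ τ)]

theorem tendsto_one_div_mul_log_comp_ceil_sub_one {f : ℕ → ℝ} {L : ℝ}
    (h : Tendsto (fun n => Real.log (f n) / n) atTop (𝓝 L)) :
    Tendsto (fun τ : ℝ => 1 / τ * Real.log (f (⌈τ⌉₊ - 1))) atTop (𝓝 L) := by
  have := tendsto_natCast_ceil_sub_one_div_atTop.mul
    (h.comp ((tendsto_sub_atTop_nat 1).comp tendsto_nat_ceil_atTop))
  rw [one_mul] at this
  refine this.congr' ?_
  filter_upwards [eventually_gt_atTop 1] with τ hτ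
  have hceil : 1 < ⌈τ⌉₊ := Nat.lt_ceil.2 (by simpa using hτ)
  have : ((⌈τ⌉₊ - 1 : ℕ) : ℝ) ≠ 0 := Nat.cast_ne_zero.2 (by omega)
  simp only [Function.comp_apply]
  field_simp

theorem tsum_ite_one_le_and_le_eq_tsum_nat_add {M : Type*} [AddCommMonoid M] [TopologicalSpace M]
    (f : ℕ → M) {m : ℕ} (hm : 0 < m) :
    (∑' q, if 1 ≤ q ∧ m ≤ q then f (q - 1) else 0) = ∑' n, f (n + (m - 1)) := by
  rw [← (add_left_injective m).tsum_eq]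
  · congr 1
    funext n
    rw [if_pos (by omega)]
    congr 1
    omega
  · intro q hq
    have : m ≤ q := by
      by_contra hlt
      exact hq (if_neg (by omega))
    exact ⟨q - m, by simp only; omega⟩

theorem spectralRadius_eq_ofReal {𝕜 A : Type*} [NormedField 𝕜] [Ring A] [Algebra 𝕜 A] {a : A}
    {r : ℝ} (hub : ∀ μ ∈ spectrum 𝕜 a, ‖μ‖ ≤ r) (hmem : ∃ μ ∈ spectrum 𝕜 a, ‖μ‖ = r) :
    spectralRadius 𝕜 a = ENNReal.ofReal r := by
  obtain ⟨μ, hμ, rfl⟩ := hmem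
  refine le_antisymm (iSup₂_le fun ν hν => ?_) (le_iSup₂_of_le μ hμ (ofReal_norm μ).le)
  rw [← ENNReal.ofReal_coe_nnreal, coe_nnnorm]
  exact ENNReal.ofReal_le_ofReal (hub ν hν)

theorem tendsto_norm_pow_rpow_inv_natCast {A : Type*} [NormedRing A] [NormedAlgebra ℂ A]
    [CompleteSpace A] {a : A} {r : ℝ} (hr : 0 ≤ r)
    (h : spectralRadius ℂ a = ENNReal.ofReal r) :
    Tendsto (fun n : ℕ => ‖a ^ n‖ ^ (n⁻¹ : ℝ)) atTop (𝓝 r) := by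
  have hgelfand := spectrum.pow_norm_pow_one_div_tendsto_nhds_spectralRadius a
  rw [h] at hgelfand
  have := (ENNReal.tendsto_toReal ENNReal.ofReal_ne_top).comp hgelfand
  rw [ENNReal.toReal_ofReal hr] at this
  refine this.congr fun n => ?_
  simp [ENNReal.toReal_ofReal (Real.rpow_nonneg (norm_nonneg _) _)]

theorem Matrix.mulVec_one_nonneg {m n : Type*} [Fintype n] {M : Matrix m n ℝ}
    (hM : ∀ i j, 0 ≤ M i j) : 0 ≤ M *ᵥ 1 :=
  fun i => dotProduct_nonneg_of_nonneg (fun j => hM i j) fun _ => zero_le_one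

section LinftyOpNorm

attribute [local instance] Matrix.linftyOpNormedAddCommGroup

variable {m n : Type*} [Fintype m] [Fintype n]

theorem Matrix.linfty_opNorm_map_algebraMap {𝕜 : Type*} [RCLike 𝕜] (M : Matrix m n ℝ) :
    ‖M.map (algebraMap ℝ 𝕜)‖ = ‖M‖ := by
  simp only [linfty_opNorm_def, map_apply, nnnorm_algebraMap']

theorem Matrix.linfty_opNorm_eq_norm_mulVec_one {M : Matrix m n ℝ} (hM : ∀ i j, 0 ≤ M i j) :
    ‖M‖ = ‖M *ᵥ 1‖ := by
  rw [linfty_opNorm_def, Pi.norm_def]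
  congr 2
  funext i
  ext
  simp [mulVec, dotProduct, abs_of_nonneg (hM i _),
    abs_of_nonneg (Finset.sum_nonneg fun j _ => hM i j)]

theorem dotProduct_le_sum_mul_norm {π : m → ℝ} (hπ : ∀ i, 0 ≤ π i) (x : m → ℝ) :
    π ⬝ᵥ x ≤ (∑ i, π i) * ‖x‖ := by
  rw [dotProduct, Finset.sum_mul]
  gcongr with i
  · exact hπ i
  · exact (le_abs_self _).trans (norm_le_pi_norm x i)

theorem sum_inv_inv_mul_norm_le_dotProduct {π x : m → ℝ} (hπ : ∀ i, 0 < π i)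
    (hx : ∀ i, 0 ≤ x i) : (∑ i, (π i)⁻¹)⁻¹ * ‖x‖ ≤ π ⬝ᵥ x := by
  have hterm (i : m) : π i * x i ≤ π ⬝ᵥ x :=
    Finset.single_le_sum (f := fun j => π j * x j) (fun j _ => mul_nonneg (hπ j).le (hx j))
      (Finset.mem_univ i)
  have hdot : 0 ≤ π ⬝ᵥ x := Finset.sum_nonneg fun j _ => mul_nonneg (hπ j).le (hx j)
  rcases isEmpty_or_nonempty m with _ | _
  · simp
  rw [inv_mul_le_iff₀ (Finset.sum_pos (fun i _ => inv_pos.2 (hπ i)) Finset.univ_nonempty)]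
  refine (pi_norm_le_iff_of_nonneg
    (mul_nonneg (Finset.sum_nonneg fun i _ => (inv_pos.2 (hπ i)).le) hdot)).2 fun i => ?_
  calc ‖x i‖ = (π i)⁻¹ * (π i * x i) := by
        rw [Real.norm_of_nonneg (hx i), inv_mul_cancel_left₀ (hπ i).ne']
    _ ≤ (π i)⁻¹ * (π ⬝ᵥ x) := by gcongr; exacts [(inv_pos.2 (hπ i)).le, hterm i]
    _ ≤ (∑ i, (π i)⁻¹) * (π ⬝ᵥ x) := by
        gcongr
        exact Finset.single_le_sum (f := fun j => (π j)⁻¹) (fun j _ => (inv_pos.2 (hπ j)).le)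
          (Finset.mem_univ i)

theorem tendsto_vecMul_pow_dotProduct_one_rpow_inv_natCast [DecidableEq m] [Nonempty m]
    {R : Matrix m m ℝ} (hR : ∀ i j, 0 ≤ R i j) {π : m → ℝ} (hπ : ∀ i, 0 < π i) {r : ℝ}
    (h : Tendsto (fun n : ℕ => ‖R ^ n‖ ^ (n⁻¹ : ℝ)) atTop (𝓝 r)) :
    Tendsto (fun n : ℕ => ((π ᵥ* R ^ n) ⬝ᵥ 1) ^ (n⁻¹ : ℝ)) atTop (𝓝 r) := by
  refine tendsto_rpow_inv_natCast_of_le_mul_of_mul_le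
    (inv_pos.2 (Finset.sum_pos (fun i _ => inv_pos.2 (hπ i)) Finset.univ_nonempty))
    (Finset.sum_pos (fun i _ => hπ i) Finset.univ_nonempty) (fun n => norm_nonneg _)
    (fun n => ?_) (fun n => ?_) h
  all_goals rw [← dotProduct_mulVec,
    Matrix.linfty_opNorm_eq_norm_mulVec_one (pow_apply_nonneg hR n)]
  · exact sum_inv_inv_mul_norm_le_dotProduct hπ (Matrix.mulVec_one_nonneg (pow_apply_nonneg hR n))
  · exact dotProduct_le_sum_mul_norm (fun i => (hπ i).le) _

end LinftyOpNorm

theorem tail_decay_rate_general (k : ℕ) (hk : 0 < k)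
    (R : Matrix (Fin k) (Fin k) ℝ) (hRnonneg : ∀ i j, 0 ≤ R i j)
    (r : ℝ) (hr0 : 0 < r) (hr1 : r < 1)
    (hrub : ∀ μ ∈ spectrum ℂ (R.map (algebraMap ℝ ℂ)), ‖μ‖ ≤ r)
    (hrmem : ∃ μ ∈ spectrum ℂ (R.map (algebraMap ℝ ℂ)), ‖μ‖ = r)
    (π₁ : Fin k → ℝ) (hπ : ∀ i, 0 < π₁ i) :
    Tendsto (fun τ : ℝ => (1 / τ) * Real.log
        (∑' q : ℕ, if 1 ≤ q ∧ (⌈τ⌉₊ : ℕ) ≤ q then (π₁ ᵥ* R ^ (q - 1)) ⬝ᵥ (fun _ => 1) else 0))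
      atTop (nhds (Real.log r)) := by
  have : Nonempty (Fin k) := Fin.pos_iff_nonempty.1 hk
  set u : ℕ → ℝ := fun n => (π₁ ᵥ* R ^ n) ⬝ᵥ 1
  have hu0 : 0 ≤ u := fun n => by
    show 0 ≤ (π₁ ᵥ* R ^ n) ⬝ᵥ 1
    rw [← dotProduct_mulVec]
    exact dotProduct_nonneg_of_nonneg (fun i => (hπ i).le)
      (Matrix.mulVec_one_nonneg (pow_apply_nonneg hRnonneg n))
  have hnorm : Tendsto (fun n : ℕ => ‖R ^ n‖ ^ (n⁻¹ : ℝ)) atTop (𝓝 r) := by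
    have hA : spectralRadius ℂ (R.map (algebraMap ℝ ℂ)) = ENNReal.ofReal r :=
      spectralRadius_eq_ofReal hrub hrmem
    -- with `a` implicit, unifying the two `Algebra ℂ` instances on matrices times out
    simpa only [← Matrix.map_pow, Matrix.linfty_opNorm_map_algebraMap] using
      tendsto_norm_pow_rpow_inv_natCast (a := R.map (algebraMap ℝ ℂ)) hr0.le hA
  have hu := tendsto_vecMul_pow_dotProduct_one_rpow_inv_natCast hRnonneg hπ hnorm
  have hlog := tendsto_log_div_of_tendsto_rpow_inv_natCast (fun N => tsum_nonneg fun n => hu0 _)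
    hr0 (tendsto_tsum_nat_add_rpow_inv_natCast hu0 hr1 hu)
  refine (tendsto_one_div_mul_log_comp_ceil_sub_one hlog).congr' ?_
  filter_upwards [eventually_gt_atTop 0] with τ hτ
  rw [← tsum_ite_one_le_and_le_eq_tsum_nat_add u (Nat.ceil_pos.2 hτ)]
  rfl -- `1 : Fin k → ℝ` versus `fun _ => 1`

/-- Let `R` be a nonnegative primitive `k×k` matrix whose spectral radius `r`
satisfies `0 < r < 1` (`r` bounds the norms of all complex eigenvalues and is
attained), and let `π₁` be a strictly positive row vector.  With
`π_q = π₁ R^{q-1}` and `Pr(Q ≥ τ) = Σ_{q ≥ ⌈τ⌉} π_q · 1`, one has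
`lim_{τ→∞} (1/τ) log Pr(Q ≥ τ) = log r`. -/
theorem tail_decay_rate (k : ℕ) (hk : 0 < k)
    (R : Matrix (Fin k) (Fin k) ℝ) (hRnonneg : ∀ i j, 0 ≤ R i j)
    (hprim : ∃ n, ∀ i j, 0 < (R ^ n) i j)
    (r : ℝ) (hr0 : 0 < r) (hr1 : r < 1)
    (hrub : ∀ μ ∈ spectrum ℂ (R.map (algebraMap ℝ ℂ)), ‖μ‖ ≤ r)
    (hrmem : ∃ μ ∈ spectrum ℂ (R.map (algebraMap ℝ ℂ)), ‖μ‖ = r)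
    (π₁ : Fin k → ℝ) (hπ : ∀ i, 0 < π₁ i) :
    Tendsto (fun τ : ℝ => (1 / τ) * Real.log
        (∑' q : ℕ, if 1 ≤ q ∧ (⌈τ⌉₊ : ℕ) ≤ q then (π₁ ᵥ* R ^ (q - 1)) ⬝ᵥ (fun _ => 1) else 0))
      atTop (nhds (Real.log r)) :=
  tail_decay_rate_general k hk R hRnonneg r hr0 hr1 hrub hrmem π₁ hπ
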